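/- If c₁ = −8M³Ĥ, then the three quasi-local masses on the exterior CMC slice have the following limits at the event horizon: lim_{r→2M⁺} m_H(r) = M, lim_{r→2M⁺} m_BY(r) = 2M, and lim_{r→2M⁺} m_LY(r) = 2M. -/

import Mathlib

open Real Filter Topology Set

/-- Schwarzschild lapse-type function `f(r) = 1 - 2M/r`. -/
noncomputable def f (M r : ℝ) : ℝ := 1 - 2 * M / r

/-- `P(r) = Ĥ·r + c₁/r²`. -/
noncomputable def P (H c1 r : ℝ) : ℝ := H * r + c1 / r ^ 2

/-- Slope of the height function of the exterior CMC slice: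
`h'(r) = P(r)/(f(r)·√(f(r) + P(r)²))`. -/
noncomputable def h' (M H c1 r : ℝ) : ℝ :=
  P H c1 r / (f M r * Real.sqrt (f M r + (P H c1 r) ^ 2))

/-- Hawking mass `m_H(r) = (r/2)(1 − (f⁻¹ − f h'²)⁻¹)`. -/
noncomputable def mH (M H c1 r : ℝ) : ℝ :=
  r / 2 * (1 - ((f M r)⁻¹ - f M r * (h' M H c1 r) ^ 2)⁻¹)

/-- Brown–York mass `m_BY(r) = r(1 − (f⁻¹ − f h'²)^(−1/2))`. -/
noncomputable def mBY (M H c1 r : ℝ) : ℝ :=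
  r * (1 - ((f M r)⁻¹ - f M r * (h' M H c1 r) ^ 2) ^ (-(1 : ℝ) / 2))

/-- Liu–Yau mass `m_LY(r) = r(1 − (1 − f² h'²)^(1/2)·(f⁻¹ − f h'²)^(−1/2))`. -/
noncomputable def mLY (M H c1 r : ℝ) : ℝ :=
  r * (1 - (1 - (f M r) ^ 2 * (h' M H c1 r) ^ 2) ^ ((1 : ℝ) / 2) *
    ((f M r)⁻¹ - f M r * (h' M H c1 r) ^ 2) ^ (-(1 : ℝ) / 2))

/-- Spacetime Hawking mass `m_H^st(r) = (r/2)(1 − (1 − f² h'²)(f⁻¹ − f h'²)⁻¹)`. -/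
noncomputable def mHst (M H c1 r : ℝ) : ℝ :=
  r / 2 * (1 - (1 - (f M r) ^ 2 * (h' M H c1 r) ^ 2) *
    ((f M r)⁻¹ - f M r * (h' M H c1 r) ^ 2)⁻¹)

/-! On the exterior the square root in `h'` collapses the masses: `f⁻¹ − f h'² = (f + P²)⁻¹` and
`1 − f² h'² = f/(f + P²)`, so `m_H = (r/2)(1 − f − P²)`, `m_BY = r(1 − √(f + P²))` and
`m_LY = r(1 − √f)`. These are continuous at `r = 2M`, where `f` vanishes, and `P` vanishes there
exactly when `c₁ = −8M³Ĥ`. -/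

variable {M H c1 r : ℝ}

lemma f_pos (hM : 0 ≤ M) (hr : 2 * M < r) : 0 < f M r := by
  have hr0 : 0 < r := by linarith
  rw [f, sub_pos, div_lt_one hr0]
  exact hr

lemma inv_f_sub_f_mul_h'_sq (hf : 0 < f M r) :
    (f M r)⁻¹ - f M r * h' M H c1 r ^ 2 = (f M r + P H c1 r ^ 2)⁻¹ := by
  have hs : 0 < f M r + P H c1 r ^ 2 := by positivity
  rw [h', div_pow, mul_pow, Real.sq_sqrt hs.le]
  field_simp
  ring

lemma one_sub_f_sq_mul_h'_sq (hf : 0 < f M r) :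
    1 - f M r ^ 2 * h' M H c1 r ^ 2 = f M r / (f M r + P H c1 r ^ 2) := by
  have hs : 0 < f M r + P H c1 r ^ 2 := by positivity
  rw [h', div_pow, mul_pow, Real.sq_sqrt hs.le]
  field_simp
  ring

lemma inv_rpow_neg_half {s : ℝ} (hs : 0 ≤ s) : s⁻¹ ^ (-(1 : ℝ) / 2) = √s := by
  rw [neg_div, Real.rpow_neg (inv_nonneg.mpr hs), Real.inv_rpow hs, inv_inv, Real.sqrt_eq_rpow]

lemma mH_eq_of_f_pos (hf : 0 < f M r) :
    mH M H c1 r = r / 2 * (1 - (f M r + P H c1 r ^ 2)) := by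
  rw [mH, inv_f_sub_f_mul_h'_sq hf, inv_inv]

lemma mBY_eq_of_f_pos (hf : 0 < f M r) :
    mBY M H c1 r = r * (1 - √(f M r + P H c1 r ^ 2)) := by
  rw [mBY, inv_f_sub_f_mul_h'_sq hf, inv_rpow_neg_half (by positivity)]

lemma mLY_eq_of_f_pos (hf : 0 < f M r) :
    mLY M H c1 r = r * (1 - √(f M r)) := by
  have hs : 0 < f M r + P H c1 r ^ 2 := by positivity
  rw [mLY, inv_f_sub_f_mul_h'_sq hf, one_sub_f_sq_mul_h'_sq hf, inv_rpow_neg_half hs.le,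
    ← Real.sqrt_eq_rpow, ← Real.sqrt_mul (div_nonneg hf.le hs.le), div_mul_cancel₀ _ hs.ne']

lemma tendsto_f_horizon (hM : M ≠ 0) : Tendsto (f M) (𝓝 (2 * M)) (𝓝 0) := by
  have h2M : 2 * M ≠ 0 := mul_ne_zero two_ne_zero hM
  have hcont : ContinuousAt (f M) (2 * M) :=
    continuousAt_const.sub (continuousAt_const.div continuousAt_id h2M)
  simpa [f, h2M] using hcont.tendsto

lemma tendsto_P_horizon (hM : M ≠ 0) (hc : c1 = -8 * M ^ 3 * H) :
    Tendsto (P H c1) (𝓝 (2 * M)) (𝓝 0) := by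
  have h2M : (2 * M) ^ 2 ≠ 0 := pow_ne_zero 2 (mul_ne_zero two_ne_zero hM)
  have hcont : ContinuousAt (P H c1) (2 * M) :=
    (continuousAt_const.mul continuousAt_id).add
      (continuousAt_const.div (continuousAt_id.pow 2) h2M)
  have hP : P H c1 (2 * M) = 0 := by
    rw [P, hc]
    field_simp
    ring
  exact hP ▸ hcont.tendsto

/-- If `c₁ = −8M³Ĥ`, then the three quasi-local masses on the exterior CMC slice have
the following limits at the event horizon: `lim_{r→2M⁺} m_H(r) = M`,
`lim_{r→2M⁺} m_BY(r) = 2M`, and `lim_{r→2M⁺} m_LY(r) = 2M`. -/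
theorem masses_horizon_limits_special (M H c1 : ℝ) (hM : 0 < M)
    (hc : c1 = -8 * M ^ 3 * H) :
    Tendsto (mH M H c1) (𝓝[>] (2 * M)) (𝓝 M) ∧
    Tendsto (mBY M H c1) (𝓝[>] (2 * M)) (𝓝 (2 * M)) ∧
    Tendsto (mLY M H c1) (𝓝[>] (2 * M)) (𝓝 (2 * M)) := by
  have hid : Tendsto id (𝓝[>] (2 * M)) (𝓝 (2 * M)) := tendsto_nhdsWithin_of_tendsto_nhds tendsto_id
  have hf := (tendsto_f_horizon hM.ne').mono_left (nhdsWithin_le_nhds (s := Ioi (2 * M)))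
  have hP := (tendsto_P_horizon hM.ne' hc).mono_left (nhdsWithin_le_nhds (s := Ioi (2 * M)))
  have hs : Tendsto (fun r ↦ f M r + P H c1 r ^ 2) (𝓝[>] (2 * M)) (𝓝 0) := by
    simpa using hf.add (hP.pow 2)
  have hpos : ∀ᶠ r in 𝓝[>] (2 * M), 0 < f M r :=
    eventually_nhdsWithin_of_forall fun r hr ↦ f_pos hM.le hr
  refine ⟨?_, ?_, ?_⟩
  · refine Tendsto.congr' (hpos.mono fun r hr ↦ (mH_eq_of_f_pos hr).symm) ?_
    simpa using (hid.div_const 2).mul ((tendsto_const_nhds (x := (1 : ℝ))).sub hs)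
  · refine Tendsto.congr' (hpos.mono fun r hr ↦ (mBY_eq_of_f_pos hr).symm) ?_
    simpa using hid.mul ((tendsto_const_nhds (x := (1 : ℝ))).sub hs.sqrt)
  · refine Tendsto.congr' (hpos.mono fun r hr ↦ (mLY_eq_of_f_pos hr).symm) ?_
    simpa using hid.mul ((tendsto_const_nhds (x := (1 : ℝ))).sub hf.sqrt)
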